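/- arXiv:2502.07762 — 4 statements merged into one kernel-verified Lean document; each statement's English description precedes it below -/
import Mathlib

section
/- Let Ω be a set with a cyclic order and let S be its separation relation. A bijection g of Ω preserves S (i.e., S(x,y,z,w) ⟺ S(g x, g y, g z, g w)) if and only if g preserves the cyclic order (i.e., [x,y,z] ⟺ [g x, g y, g z]) or reverses it (i.e., [x,y,z] ⟺ [g z, g y, g x]). For the 'only if' direction, assume Ω contains at least three distinct elements u,v,w with [u,v,w]. -/
/-- A cyclic order on `Ω`: a ternary relation satisfying cyclicity, asymmetry,
transitivity and connectedness. -/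
def IsCyclicOrder {Ω : Type*} (R : Ω → Ω → Ω → Prop) : Prop :=
  (∀ a b c, R a b c → R b c a) ∧
  (∀ a b c, R a b c → ¬ R c b a) ∧
  (∀ a b c d, R a b c → R a c d → R a b d) ∧
  (∀ a b c, a ≠ b → b ≠ c → a ≠ c → R a b c ∨ R c b a)

/-- The separation relation associated to a cyclic order. -/
def sepRel {Ω : Type*} (R : Ω → Ω → Ω → Prop) (a b c d : Ω) : Prop :=
  (R a b c ∧ R c d a) ∨ (R a d c ∧ R c b a)

section Aux

variable {Ω : Type*}

lemma cyc_ne {R : Ω → Ω → Ω → Prop} (hR : IsCyclicOrder R) {a b c : Ω}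
    (h : R a b c) : a ≠ b ∧ b ≠ c ∧ a ≠ c := by
  obtain ⟨hcyc, hasym, -, -⟩ := hR
  refine ⟨?_, ?_, ?_⟩ <;> rintro rfl
  · exact hasym _ _ _ (hcyc _ _ _ h) (hcyc _ _ _ h)
  · exact hasym _ _ _ (hcyc _ _ _ (hcyc _ _ _ h)) (hcyc _ _ _ (hcyc _ _ _ h))
  · exact hasym _ _ _ h h

lemma cyc_not_iff {R : Ω → Ω → Ω → Prop} (hR : IsCyclicOrder R) {a b c : Ω}
    (hab : a ≠ b) (hbc : b ≠ c) (hac : a ≠ c) : R a b c ↔ ¬ R c b a := by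
  constructor
  · exact hR.2.1 a b c
  · intro h
    rcases hR.2.2.2 a b c hab hbc hac with h' | h'
    · exact h'
    · exact absurd h' h

/-- Key fact: from a known triple `R p q r`, the separation relation with a
fourth point characterizes the cyclic order. -/
lemma sep_char {R : Ω → Ω → Ω → Prop} (hR : IsCyclicOrder R) {p q r : Ω}
    (h : R p q r) (s : Ω) : sepRel R p q r s ↔ R p r s := by
  obtain ⟨hcyc, hasym, -, -⟩ := hR
  constructor
  · rintro (⟨-, h2⟩ | ⟨-, h2⟩)
    · exact hcyc _ _ _ (hcyc _ _ _ h2)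
    · exact absurd h2 (hasym _ _ _ h)
  · intro h'
    exact Or.inl ⟨h, hcyc _ _ _ h'⟩

/-- The reversal of a cyclic order is a cyclic order. -/
lemma rev_cyclic {R : Ω → Ω → Ω → Prop} (hR : IsCyclicOrder R) :
    IsCyclicOrder (fun a b c => R c b a) := by
  obtain ⟨hcyc, hasym, htrans, htot⟩ := hR
  refine ⟨?_, ?_, ?_, ?_⟩
  · intro a b c h
    exact hcyc _ _ _ (hcyc _ _ _ h)
  · intro a b c h
    exact hasym _ _ _ h
  · intro a b c d h1 h2
    show R d b a
    exact hcyc _ _ _ (htrans a d c b (hcyc _ _ _ (hcyc _ _ _ h2))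
      (hcyc _ _ _ (hcyc _ _ _ h1)))
  · intro a b c hab hbc hac
    show R c b a ∨ R a b c
    exact Or.symm (htot a b c hab hbc hac)

lemma sep_rev {R : Ω → Ω → Ω → Prop} (a b c d : Ω) :
    sepRel (fun x y z => R z y x) a b c d ↔ sepRel R a b c d := by
  simp only [sepRel]
  tauto

variable {R R₂ : Ω → Ω → Ω → Prop} (hR : IsCyclicOrder R) (hR₂ : IsCyclicOrder R₂)
  (g : Ω ≃ Ω)
  (hsep : ∀ x y z t : Ω, sepRel R x y z t ↔ sepRel R₂ (g x) (g y) (g z) (g t))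

/-- A pair `(a, b)` is *good* if `g` transports triples based at it. -/
def GoodPair (R R₂ : Ω → Ω → Ω → Prop) (g : Ω ≃ Ω) (a b : Ω) : Prop :=
  ∀ s, R a b s ↔ R₂ (g a) (g b) (g s)

include hR hR₂ hsep

lemma good_of_agreed {p q r : Ω} (h : R p q r) (h₂ : R₂ (g p) (g q) (g r)) :
    GoodPair R R₂ g p r := by
  intro s
  rw [← sep_char hR h s, ← sep_char hR₂ h₂ (g s)]
  exact hsep p q r s

lemma good_symm {a b : Ω} (hab : a ≠ b) (h : GoodPair R R₂ g a b) :
    GoodPair R R₂ g b a := by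
  intro s
  by_cases hsa : s = a
  · subst hsa
    constructor
    · intro h'; exact absurd rfl (cyc_ne hR h').2.1
    · intro h'; exact absurd rfl (cyc_ne hR₂ h').2.1
  by_cases hsb : s = b
  · subst hsb
    constructor
    · intro h'; exact absurd rfl (cyc_ne hR h').2.2
    · intro h'; exact absurd rfl (cyc_ne hR₂ h').2.2
  have hgab : g a ≠ g b := fun e => hab (g.injective e)
  have hgas : g a ≠ g s := fun e => hsa (g.injective e).symm
  have hgbs : g b ≠ g s := fun e => hsb (g.injective e).symm
  have e1 : R b a s ↔ ¬ R a b s := by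
    constructor
    · intro h' hh
      exact hR.2.1 _ _ _ h' (hR.1 _ _ _ (hR.1 _ _ _ hh))
    · intro h'
      rcases hR.2.2.2 a b s hab (Ne.symm hsb) (Ne.symm hsa) with h'' | h''
      · exact absurd h'' h'
      · exact hR.1 _ _ _ h''
  have e2 : R₂ (g b) (g a) (g s) ↔ ¬ R₂ (g a) (g b) (g s) := by
    constructor
    · intro h' hh
      exact hR₂.2.1 _ _ _ h' (hR₂.1 _ _ _ (hR₂.1 _ _ _ hh))
    · intro h'
      rcases hR₂.2.2.2 (g a) (g b) (g s) hgab hgbs hgas with h'' | h''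
      · exact absurd h'' h'
      · exact hR₂.1 _ _ _ h''
  rw [e1, e2, h s]

lemma good_step {a b : Ω} (hab : a ≠ b) (h : GoodPair R R₂ g a b)
    {s : Ω} (hsa : s ≠ a) (hsb : s ≠ b) : GoodPair R R₂ g a s := by
  have hgab : g a ≠ g b := fun e => hab (g.injective e)
  have hgas : g a ≠ g s := fun e => hsa (g.injective e).symm
  have hgbs : g b ≠ g s := fun e => hsb (g.injective e).symm
  rcases hR.2.2.2 a b s hab (Ne.symm hsb) (Ne.symm hsa) with h' | h'
  · exact good_of_agreed hR hR₂ g hsep h' ((h s).mp h')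
  · -- R s b a holds; then ¬ R a b s, whence R₂ (g a) (g s) (g b) and R₂ (g s) (g b) (g a)
    have hnot : ¬ R a b s := fun hh => hR.2.1 _ _ _ hh h'
    have hnot₂ : ¬ R₂ (g a) (g b) (g s) := fun hh => hnot ((h s).mpr hh)
    have h₂ : R₂ (g s) (g b) (g a) := by
      rcases hR₂.2.2.2 (g a) (g b) (g s) hgab hgbs hgas with hh | hh
      · exact absurd hh hnot₂
      · exact hh
    exact good_symm hR hR₂ g hsep hsa
      (good_of_agreed hR hR₂ g hsep h' h₂)

lemma good_extend {a b : Ω} (hab : a ≠ b) (h : GoodPair R R₂ g a b)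
    {y : Ω} (hy : y ≠ a) : GoodPair R R₂ g a y := by
  by_cases hyb : y = b
  · subst hyb; exact h
  · exact good_step hR hR₂ g hsep hab h hy hyb

lemma main_lemma {u v w : Ω} (huvw : R u v w) (h₂ : R₂ (g u) (g v) (g w)) :
    ∀ x y z : Ω, R x y z ↔ R₂ (g x) (g y) (g z) := by
  have huw : u ≠ w := (cyc_ne hR huvw).2.2
  have base : GoodPair R R₂ g u w := good_of_agreed hR hR₂ g hsep huvw h₂
  have all_good : ∀ x y : Ω, x ≠ y → GoodPair R R₂ g x y := by
    intro x y hxy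
    by_cases hxu : x = u
    · subst hxu
      exact good_extend hR hR₂ g hsep huw base (Ne.symm hxy)
    · have h1 : GoodPair R R₂ g u x := good_extend hR hR₂ g hsep huw base hxu
      have h2 : GoodPair R R₂ g x u := good_symm hR hR₂ g hsep (Ne.symm hxu) h1
      exact good_extend hR hR₂ g hsep hxu h2 (Ne.symm hxy)
  intro x y z
  by_cases hxy : x = y
  · subst hxy
    constructor
    · intro h'; exact absurd rfl (cyc_ne hR h').1
    · intro h'; exact absurd rfl (cyc_ne hR₂ h').1
  · exact all_good x y hxy z

end Aux

/-- A bijection of `Ω` preserves the separation relation of a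
cyclic order if and only if it preserves or reverses the cyclic order
(assuming there exist three distinct elements `u, v, w` with `R u v w`). -/
theorem preserves_sep_iff_preserves_or_reverses {Ω : Type*} (R : Ω → Ω → Ω → Prop)
    (hR : IsCyclicOrder R) (u v w : Ω) (huv : u ≠ v) (hvw : v ≠ w) (huw : u ≠ w)
    (huvw : R u v w) (g : Ω ≃ Ω) :
    (∀ x y z t : Ω, sepRel R x y z t ↔ sepRel R (g x) (g y) (g z) (g t)) ↔
      ((∀ x y z : Ω, R x y z ↔ R (g x) (g y) (g z)) ∨
       (∀ x y z : Ω, R x y z ↔ R (g z) (g y) (g x))) := by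
  constructor
  · intro hsep
    have hguv : g u ≠ g v := fun e => huv (g.injective e)
    have hgvw : g v ≠ g w := fun e => hvw (g.injective e)
    have hguw : g u ≠ g w := fun e => huw (g.injective e)
    rcases hR.2.2.2 (g u) (g v) (g w) hguv hgvw hguw with h | h
    · exact Or.inl (main_lemma hR hR g hsep huvw h)
    · refine Or.inr ?_
      have hsep' : ∀ x y z t : Ω,
          sepRel R x y z t ↔ sepRel (fun a b c => R c b a) (g x) (g y) (g z) (g t) := by
        intro x y z t
        exact (hsep x y z t).trans (sep_rev (R := R) (g x) (g y) (g z) (g t)).symm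
      exact main_lemma hR (rev_cyclic hR) g hsep' huvw h
  · rintro (h | h) x y z t
    · simp only [sepRel]
      rw [h x y z, h z t x, h x t z, h z y x]
    · simp only [sepRel]
      rw [h x y z, h z t x, h x t z, h z y x]
      tauto
end

section
/- The group Aut(S) of bijections of ℚ/ℤ preserving the separation relation S acts 3-transitively: for any two triples (a,b,c) and (a',b',c') of pairwise distinct points of ℚ/ℤ, there exists g ∈ Aut(S) with g(a)=a', g(b)=b', g(c)=c'. -/
/-- `ℚ/ℤ`, identified with `ℚ ∩ [0,1)`. -/
abbrev QC : Type := {q : ℚ // 0 ≤ q ∧ q < 1}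

/-- The standard cyclic order on `ℚ ∩ [0,1)`. -/
def cyc (x y z : QC) : Prop :=
  (x.1 < y.1 ∧ y.1 < z.1) ∨ (y.1 < z.1 ∧ z.1 < x.1) ∨ (z.1 < x.1 ∧ x.1 < y.1)

/-- The separation relation associated to the cyclic order. -/
def sep (a b c d : QC) : Prop :=
  (cyc a b c ∧ cyc c d a) ∨ (cyc a d c ∧ cyc c b a)

namespace AutSAux

/-! ### Generic lemmas relating `cyc` and `sep` -/

lemma sep_of_cyc_iff (g : QC ≃ QC)
    (h : ∀ x y z : QC, cyc x y z ↔ cyc (g x) (g y) (g z)) :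
    ∀ x y z w : QC, sep x y z w ↔ sep (g x) (g y) (g z) (g w) := by
  intro x y z w
  simp only [sep]
  rw [h x y z, h z w x, h x w z, h z y x]

lemma sep_of_cyc_rev (g : QC ≃ QC)
    (h : ∀ x y z : QC, cyc x y z ↔ cyc (g z) (g y) (g x)) :
    ∀ x y z w : QC, sep x y z w ↔ sep (g x) (g y) (g z) (g w) := by
  intro x y z w
  simp only [sep]
  rw [h x y z, h z w x, h x w z, h z y x]
  tauto

lemma cyc_rotate {x y z : QC} (h : cyc x y z) : cyc z x y := by
  unfold cyc at h ⊢; tauto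

lemma cyc_total (a b c : QC) (hab : a.1 ≠ b.1) (hbc : b.1 ≠ c.1) (hac : a.1 ≠ c.1) :
    cyc a b c ∨ cyc a c b := by
  unfold cyc
  rcases hab.lt_or_gt with h1 | h1 <;>
  rcases hbc.lt_or_gt with h2 | h2 <;>
  rcases hac.lt_or_gt with h3 | h3 <;>
  first | tauto | linarith

lemma zero_cyc {y z : QC} (h : cyc ⟨0, by norm_num⟩ y z) : 0 < y.1 ∧ y.1 < z.1 := by
  have hz := z.2.1
  rcases h with ⟨h1, h2⟩ | ⟨h1, h2⟩ | ⟨h1, h2⟩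
  · exact ⟨h1, h2⟩
  · exact absurd h2 (by simpa using not_lt.mpr hz)
  · exact absurd h1 (by simpa using not_lt.mpr hz)

/-! ### Rotations -/

def rotF (t : ℚ) (x : QC) : QC :=
  ⟨Int.fract (x.1 + t), Int.fract_nonneg _, Int.fract_lt_one _⟩

lemma rotF_rotF (t : ℚ) (x : QC) : rotF (-t) (rotF t x) = x := by
  apply Subtype.ext
  show Int.fract (Int.fract (x.1 + t) + -t) = x.1
  have h1 : Int.fract (x.1 + t) + -t = x.1 - (⌊x.1 + t⌋ : ℤ) := by
    rw [Int.fract]; push_cast; ring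
  rw [h1, Int.fract_sub_intCast, Int.fract_eq_self.mpr ⟨x.2.1, x.2.2⟩]

lemma rotF_rotF' (t : ℚ) (x : QC) : rotF t (rotF (-t) x) = x := by
  have := rotF_rotF (-t) x
  rwa [neg_neg] at this

lemma fract_small {u : ℚ} (h0 : 0 ≤ u) (h2 : u < 2) :
    Int.fract u = if u < 1 then u else u - 1 := by
  split_ifs with h
  · exact Int.fract_eq_self.mpr ⟨h0, h⟩
  · have e : Int.fract u = Int.fract (u - ((1 : ℤ) : ℚ)) := (Int.fract_sub_intCast u 1).symm
    rw [e]
    push_cast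
    rw [Int.fract_eq_self.mpr ⟨by linarith, by linarith⟩]

lemma cyc_rotF (t : ℚ) {x y z : QC} (h : cyc x y z) :
    cyc (rotF t x) (rotF t y) (rotF t z) := by
  have hs0 : 0 ≤ Int.fract t := Int.fract_nonneg t
  have hs1 : Int.fract t < 1 := Int.fract_lt_one t
  set s := Int.fract t with hsdef
  have key : ∀ w : QC, (rotF t w).1 = if w.1 + s < 1 then w.1 + s else w.1 + s - 1 := by
    intro w
    show Int.fract (w.1 + t) = _
    have e : w.1 + t = (w.1 + s) + ((⌊t⌋ : ℤ) : ℚ) := by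
      rw [hsdef, Int.fract]; push_cast; ring
    rw [e, Int.fract_add_intCast,
      fract_small (by have := w.2.1; linarith) (by have := w.2.2; linarith)]
  obtain ⟨hx0, hx1⟩ := x.2
  obtain ⟨hy0, hy1⟩ := y.2
  obtain ⟨hz0, hz1⟩ := z.2
  unfold cyc at h ⊢
  rw [key x, key y, key z]
  split_ifs <;>
    rcases h with ⟨ha, hb⟩ | ⟨ha, hb⟩ | ⟨ha, hb⟩ <;>
      first
        | exact Or.inl ⟨by linarith, by linarith⟩
        | exact Or.inr (Or.inl ⟨by linarith, by linarith⟩)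
        | exact Or.inr (Or.inr ⟨by linarith, by linarith⟩)
        | (exfalso; linarith)

lemma cyc_rotF_iff (t : ℚ) (x y z : QC) :
    cyc x y z ↔ cyc (rotF t x) (rotF t y) (rotF t z) := by
  constructor
  · exact cyc_rotF t
  · intro h
    have := cyc_rotF (-t) h
    rwa [rotF_rotF, rotF_rotF, rotF_rotF] at this

def rotE (t : ℚ) : QC ≃ QC where
  toFun := rotF t
  invFun := rotF (-t)
  left_inv := rotF_rotF t
  right_inv := rotF_rotF' t

/-! ### Reflection -/

def reflF (x : QC) : QC :=
  if h : x.1 = 0 then x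
  else ⟨1 - x.1, by
    obtain ⟨h0, h1⟩ := x.2
    have : 0 < x.1 := lt_of_le_of_ne h0 (Ne.symm h)
    constructor <;> linarith⟩

lemma reflF_val (x : QC) : (reflF x).1 = if x.1 = 0 then 0 else 1 - x.1 := by
  unfold reflF
  split_ifs with h
  · exact h
  · rfl

lemma reflF_reflF (x : QC) : reflF (reflF x) = x := by
  apply Subtype.ext
  rw [reflF_val, reflF_val]
  obtain ⟨h0, h1⟩ := x.2
  split_ifs with h2 h3 h3 <;> first | linarith | simp_all | (exfalso; linarith) | ring

def reflE : QC ≃ QC where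
  toFun := reflF
  invFun := reflF
  left_inv := reflF_reflF
  right_inv := reflF_reflF

lemma cyc_reflF {x y z : QC} (h : cyc x y z) : cyc (reflF z) (reflF y) (reflF x) := by
  obtain ⟨hx0, hx1⟩ := x.2
  obtain ⟨hy0, hy1⟩ := y.2
  obtain ⟨hz0, hz1⟩ := z.2
  unfold cyc at h ⊢
  rw [reflF_val, reflF_val, reflF_val]
  split_ifs <;>
    rcases h with ⟨ha, hb⟩ | ⟨ha, hb⟩ | ⟨ha, hb⟩ <;>
      first
        | exact Or.inl ⟨by linarith, by linarith⟩
        | exact Or.inr (Or.inl ⟨by linarith, by linarith⟩)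
        | exact Or.inr (Or.inr ⟨by linarith, by linarith⟩)
        | (exfalso; linarith)

lemma cyc_reflF_iff (x y z : QC) :
    cyc x y z ↔ cyc (reflF z) (reflF y) (reflF x) := by
  constructor
  · exact cyc_reflF
  · intro h
    have := cyc_reflF h
    rwa [reflF_reflF, reflF_reflF, reflF_reflF] at this

/-! ### Piecewise linear maps -/

def plF (b c b' c' x : ℚ) : ℚ :=
  if x < b then x * (b' / b)
  else if x < c then b' + (x - b) * ((c' - b') / (c - b))
  else c' + (x - c) * ((1 - c') / (1 - c))

section PL

variable {b c b' c' : ℚ}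

lemma slope1 (hb : 0 < b) (hb' : 0 < b') : 0 < b' / b := div_pos hb' hb
lemma slope2 (hbc : b < c) (hbc' : b' < c') : 0 < (c' - b') / (c - b) :=
  div_pos (by linarith) (by linarith)
lemma slope3 (hc : c < 1) (hc' : c' < 1) : 0 < (1 - c') / (1 - c) :=
  div_pos (by linarith) (by linarith)

lemma prod1 (hb : 0 < b) : b * (b' / b) = b' := by field_simp
lemma prod2 (hbc : b < c) : (c - b) * ((c' - b') / (c - b)) = c' - b' := by
  rw [mul_div_assoc', mul_comm, mul_div_assoc, div_self (by linarith : c - b ≠ 0), mul_one]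
lemma prod3 (hc : c < 1) : (1 - c) * ((1 - c') / (1 - c)) = 1 - c' := by
  rw [mul_div_assoc', mul_comm, mul_div_assoc, div_self (by linarith : (1:ℚ) - c ≠ 0), mul_one]

lemma plF_mem (hb : 0 < b) (hbc : b < c) (hc : c < 1)
    (hb' : 0 < b') (hbc' : b' < c') (hc' : c' < 1)
    {x : ℚ} (hx0 : 0 ≤ x) (hx1 : x < 1) :
    0 ≤ plF b c b' c' x ∧ plF b c b' c' x < 1 := by
  have p1 := slope1 hb hb'
  have p2 := slope2 hbc hbc'
  have p3 := slope3 hc hc'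
  have q1 := prod1 (b' := b') hb
  have q2 := prod2 (c' := c') (b' := b') hbc
  have q3 := prod3 (c' := c') hc
  unfold plF
  split_ifs with h1 h2
  · constructor
    · exact mul_nonneg hx0 p1.le
    · have := mul_lt_mul_of_pos_right h1 p1
      linarith
  · constructor
    · have := mul_nonneg (by linarith : (0:ℚ) ≤ x - b) p2.le
      linarith
    · have := mul_lt_mul_of_pos_right (by linarith : x - b < c - b) p2
      linarith
  · constructor
    · have := mul_nonneg (by linarith : (0:ℚ) ≤ x - c) p3.le
      linarith
    · have := mul_lt_mul_of_pos_right (by linarith : x - c < 1 - c) p3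
      linarith

lemma plF_strictMono (hb : 0 < b) (hbc : b < c) (hc : c < 1)
    (hb' : 0 < b') (hbc' : b' < c') (hc' : c' < 1)
    {x y : ℚ} (hx0 : 0 ≤ x) (hy1 : y < 1) (hxy : x < y) :
    plF b c b' c' x < plF b c b' c' y := by
  have p1 := slope1 hb hb'
  have p2 := slope2 hbc hbc'
  have p3 := slope3 hc hc'
  have q1 := prod1 (b' := b') hb
  have q2 := prod2 (c' := c') (b' := b') hbc
  have q3 := prod3 (c' := c') hc
  unfold plF
  split_ifs with h1 h2 h3 h4 h5 h6 h7
  · exact mul_lt_mul_of_pos_right hxy p1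
  · have k1 := mul_lt_mul_of_pos_right h1 p1
    have k2 := mul_nonneg (by linarith : (0:ℚ) ≤ y - b) p2.le
    linarith
  · have k1 := mul_lt_mul_of_pos_right h1 p1
    have k2 := mul_nonneg (by linarith : (0:ℚ) ≤ y - c) p3.le
    linarith
  · exfalso; linarith
  · have := mul_lt_mul_of_pos_right (by linarith : x - b < y - b) p2
    linarith
  · have k1 := mul_lt_mul_of_pos_right (by linarith : x - b < c - b) p2
    have k2 := mul_nonneg (by linarith : (0:ℚ) ≤ y - c) p3.le
    linarith
  · exfalso; linarith
  · exfalso; linarith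
  · have := mul_lt_mul_of_pos_right (by linarith : x - c < y - c) p3
    linarith

lemma plF_lt_iff (hb : 0 < b) (hbc : b < c) (hc : c < 1)
    (hb' : 0 < b') (hbc' : b' < c') (hc' : c' < 1)
    {x y : ℚ} (hx0 : 0 ≤ x) (hx1 : x < 1) (hy0 : 0 ≤ y) (hy1 : y < 1) :
    x < y ↔ plF b c b' c' x < plF b c b' c' y := by
  constructor
  · exact plF_strictMono hb hbc hc hb' hbc' hc' hx0 hy1
  · intro h
    rcases lt_trichotomy x y with h' | h' | h'
    · exact h'
    · exfalso; rw [h'] at h; exact lt_irrefl _ h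
    · exfalso
      have := plF_strictMono hb hbc hc hb' hbc' hc' hy0 hx1 h'
      linarith

lemma plF_leftInv (hb : 0 < b) (hbc : b < c) (hc : c < 1)
    (hb' : 0 < b') (hbc' : b' < c') (hc' : c' < 1)
    {x : ℚ} (hx0 : 0 ≤ x) (hx1 : x < 1) :
    plF b' c' b c (plF b c b' c' x) = x := by
  have p1 := slope1 hb hb'
  have p2 := slope2 hbc hbc'
  have p3 := slope3 hc hc'
  have hbne : b ≠ 0 := by linarith
  have hbne' : b' ≠ 0 := by linarith
  have hcbne : c - b ≠ 0 := by linarith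
  have hcbne' : c' - b' ≠ 0 := by linarith
  have hc1ne : (1:ℚ) - c ≠ 0 := by linarith
  have hc1ne' : (1:ℚ) - c' ≠ 0 := by linarith
  have q1 := prod1 (b' := b') hb
  have q2 := prod2 (c' := c') (b' := b') hbc
  have q3 := prod3 (c' := c') hc
  rcases lt_or_ge x b with h1 | h1
  · have hv : plF b c b' c' x = x * (b' / b) := by unfold plF; rw [if_pos h1]
    have hvb : x * (b' / b) < b' := by
      have := mul_lt_mul_of_pos_right h1 p1
      linarith
    rw [hv]
    unfold plF
    rw [if_pos hvb]
    field_simp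
  · rcases lt_or_ge x c with h2 | h2
    · have hv : plF b c b' c' x = b' + (x - b) * ((c' - b') / (c - b)) := by
        unfold plF; rw [if_neg (not_lt.mpr h1), if_pos h2]
      have hlo : ¬ (b' + (x - b) * ((c' - b') / (c - b)) < b') := by
        have := mul_nonneg (by linarith : (0:ℚ) ≤ x - b) p2.le
        push_neg
        linarith
      have hhi : b' + (x - b) * ((c' - b') / (c - b)) < c' := by
        have := mul_lt_mul_of_pos_right (by linarith : x - b < c - b) p2
        linarith
      rw [hv]
      unfold plF
      rw [if_neg hlo, if_pos hhi]
      field_simp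
      ring
    · have hv : plF b c b' c' x = c' + (x - c) * ((1 - c') / (1 - c)) := by
        unfold plF; rw [if_neg (not_lt.mpr h1), if_neg (not_lt.mpr h2)]
      have hlo : ¬ (c' + (x - c) * ((1 - c') / (1 - c)) < b') := by
        have := mul_nonneg (by linarith : (0:ℚ) ≤ x - c) p3.le
        push_neg
        linarith
      have hlo2 : ¬ (c' + (x - c) * ((1 - c') / (1 - c)) < c') := by
        have := mul_nonneg (by linarith : (0:ℚ) ≤ x - c) p3.le
        push_neg
        linarith
      rw [hv]
      unfold plF
      rw [if_neg hlo, if_neg hlo2]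
      field_simp
      ring

lemma plF_zero (hb : 0 < b) : plF b c b' c' 0 = 0 := by
  unfold plF; rw [if_pos hb]; ring

lemma plF_b (hb : 0 < b) (hbc : b < c) : plF b c b' c' b = b' := by
  unfold plF; rw [if_neg (lt_irrefl b), if_pos hbc]; ring

lemma plF_c (hbc : b < c) (hc : c < 1) : plF b c b' c' c = c' := by
  unfold plF
  rw [if_neg (not_lt.mpr hbc.le), if_neg (lt_irrefl c)]; ring

def plE (hb : 0 < b) (hbc : b < c) (hc : c < 1)
    (hb' : 0 < b') (hbc' : b' < c') (hc' : c' < 1) : QC ≃ QC where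
  toFun x := ⟨plF b c b' c' x.1, plF_mem hb hbc hc hb' hbc' hc' x.2.1 x.2.2⟩
  invFun x := ⟨plF b' c' b c x.1, plF_mem hb' hbc' hc' hb hbc hc x.2.1 x.2.2⟩
  left_inv x := Subtype.ext (plF_leftInv hb hbc hc hb' hbc' hc' x.2.1 x.2.2)
  right_inv x := Subtype.ext (plF_leftInv hb' hbc' hc' hb hbc hc x.2.1 x.2.2)

lemma cyc_plE (hb : 0 < b) (hbc : b < c) (hc : c < 1)
    (hb' : 0 < b') (hbc' : b' < c') (hc' : c' < 1) (x y z : QC) :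
    cyc x y z ↔ cyc (plE hb hbc hc hb' hbc' hc' x) (plE hb hbc hc hb' hbc' hc' y)
      (plE hb hbc hc hb' hbc' hc' z) := by
  have exy := plF_lt_iff hb hbc hc hb' hbc' hc' x.2.1 x.2.2 y.2.1 y.2.2
  have eyz := plF_lt_iff hb hbc hc hb' hbc' hc' y.2.1 y.2.2 z.2.1 z.2.2
  have ezx := plF_lt_iff hb hbc hc hb' hbc' hc' z.2.1 z.2.2 x.2.1 x.2.2
  simp only [cyc]
  rw [exy, eyz, ezx]
  rfl

end PL

/-! ### The orientation-preserving case -/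

lemma exists_op (a b c a' b' c' : QC) (h : cyc a b c) (h' : cyc a' b' c') :
    ∃ g : QC ≃ QC, (∀ x y z : QC, cyc x y z ↔ cyc (g x) (g y) (g z)) ∧
      g a = a' ∧ g b = b' ∧ g c = c' := by
  have ra : rotF (-a.1) a = ⟨0, by norm_num⟩ := by
    apply Subtype.ext
    show Int.fract (a.1 + -a.1) = 0
    simp
  have ra' : rotF (-a'.1) a' = ⟨0, by norm_num⟩ := by
    apply Subtype.ext
    show Int.fract (a'.1 + -a'.1) = 0
    simp
  set b0 := rotF (-a.1) b with hb0def
  set c0 := rotF (-a.1) c with hc0def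
  set b0' := rotF (-a'.1) b' with hb0'def
  set c0' := rotF (-a'.1) c' with hc0'def
  have h0 : cyc ⟨0, by norm_num⟩ b0 c0 := by
    have := cyc_rotF (-a.1) h
    rwa [ra] at this
  have h0' : cyc ⟨0, by norm_num⟩ b0' c0' := by
    have := cyc_rotF (-a'.1) h'
    rwa [ra'] at this
  obtain ⟨hb0, hbc0⟩ := zero_cyc h0
  obtain ⟨hb0', hbc0'⟩ := zero_cyc h0'
  have hc0 : c0.1 < 1 := c0.2.2
  have hc0' : c0'.1 < 1 := c0'.2.2
  set P := plE hb0 hbc0 hc0 hb0' hbc0' hc0' with hPdef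
  refine ⟨(rotE (-a.1)).trans (P.trans (rotE a'.1)), ?_, ?_, ?_, ?_⟩
  · intro x y z
    rw [cyc_rotF_iff (-a.1) x y z,
      cyc_plE hb0 hbc0 hc0 hb0' hbc0' hc0' (rotF (-a.1) x) (rotF (-a.1) y) (rotF (-a.1) z),
      cyc_rotF_iff (a'.1)]
    rfl
  · show rotF a'.1 (P (rotF (-a.1) a)) = a'
    rw [ra]
    have hP0 : P ⟨0, by norm_num⟩ = ⟨0, by norm_num⟩ :=
      Subtype.ext (plF_zero hb0)
    rw [hP0]
    apply Subtype.ext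
    show Int.fract (0 + a'.1) = a'.1
    rw [zero_add, Int.fract_eq_self.mpr ⟨a'.2.1, a'.2.2⟩]
  · show rotF a'.1 (P (rotF (-a.1) b)) = b'
    have hPb : P b0 = b0' := Subtype.ext (plF_b hb0 hbc0)
    rw [← hb0def, hPb, hb0'def, rotF_rotF']
  · show rotF a'.1 (P (rotF (-a.1) c)) = c'
    have hPc : P c0 = c0' := Subtype.ext (plF_c hbc0 hc0)
    rw [← hc0def, hPc, hc0'def, rotF_rotF']

end AutSAux

open AutSAux in
/-- The group `Aut(S)` of separation-preserving bijections of
`ℚ/ℤ` acts 3-transitively. -/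
theorem autS_three_transitive :
    ∀ a b c a' b' c' : QC,
      a ≠ b → b ≠ c → a ≠ c → a' ≠ b' → b' ≠ c' → a' ≠ c' →
      ∃ g : QC ≃ QC,
        (∀ x y z w : QC, sep x y z w ↔ sep (g x) (g y) (g z) (g w)) ∧
        g a = a' ∧ g b = b' ∧ g c = c' := by
  intro a b c a' b' c' hab hbc hac hab' hbc' hac'
  have hab1 : a.1 ≠ b.1 := fun h => hab (Subtype.ext h)
  have hbc1 : b.1 ≠ c.1 := fun h => hbc (Subtype.ext h)
  have hac1 : a.1 ≠ c.1 := fun h => hac (Subtype.ext h)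
  have hab1' : a'.1 ≠ b'.1 := fun h => hab' (Subtype.ext h)
  have hbc1' : b'.1 ≠ c'.1 := fun h => hbc' (Subtype.ext h)
  have hac1' : a'.1 ≠ c'.1 := fun h => hac' (Subtype.ext h)
  rcases cyc_total a b c hab1 hbc1 hac1 with h | h <;>
    rcases cyc_total a' b' c' hab1' hbc1' hac1' with h' | h'
  · obtain ⟨g, hg, hga, hgb, hgc⟩ := exists_op a b c a' b' c' h h'
    exact ⟨g, sep_of_cyc_iff g hg, hga, hgb, hgc⟩
  · -- cyc a b c, cyc a' c' b' : use reflection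
    have hr : cyc (reflF a) (reflF c) (reflF b) := cyc_rotate (cyc_reflF h)
    obtain ⟨g, hg, hga, hgc, hgb⟩ := exists_op (reflF a) (reflF c) (reflF b) a' c' b' hr h'
    refine ⟨reflE.trans g, ?_, hga, hgb, hgc⟩
    apply sep_of_cyc_rev
    intro x y z
    rw [cyc_reflF_iff x y z, hg (reflF z) (reflF y) (reflF x)]
    rfl
  · -- cyc a c b, cyc a' b' c' : use reflection
    have hr : cyc (reflF a) (reflF b) (reflF c) := cyc_rotate (cyc_reflF h)
    obtain ⟨g, hg, hga, hgb, hgc⟩ := exists_op (reflF a) (reflF b) (reflF c) a' b' c' hr h'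
    refine ⟨reflE.trans g, ?_, hga, hgb, hgc⟩
    apply sep_of_cyc_rev
    intro x y z
    rw [cyc_reflF_iff x y z, hg (reflF z) (reflF y) (reflF x)]
    exact Iff.rfl
  · obtain ⟨g, hg, hga, hgc, hgb⟩ := exists_op a c b a' c' b' h h'
    exact ⟨g, sep_of_cyc_iff g hg, hga, hgb, hgc⟩
end

section
/- Let T be a tree and let F be a center-closed set of vertices of T (F contains the center of any three distinct vertices of F). Then for every connected component A of T \ F, the set ∂A of vertices of F at distance 1 from A has at most two elements. -/
/-- Helper lemma: given a path `r : a → b` and a path `p : c → d` with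
`b ∈ p.support`, there is a vertex `m` on both walks and a path `a → d`
through `m` supported in the union of the two supports. -/
lemma exists_meet_path {V : Type*} [DecidableEq V] {T : SimpleGraph V} {c d : V} {p : T.Walk c d}
    (hp : p.IsPath) :
    ∀ {a b : V} (r : T.Walk a b), r.IsPath → b ∈ p.support →
      ∃ m, m ∈ r.support ∧ m ∈ p.support ∧
        ∃ q : T.Walk a d, q.IsPath ∧ m ∈ q.support ∧
          ∀ s ∈ q.support, s ∈ r.support ∨ s ∈ p.support
  | a, _, SimpleGraph.Walk.nil, _, hb =>
    ⟨a, SimpleGraph.Walk.start_mem_support _, hb, p.dropUntil a hb, hp.dropUntil hb,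
      SimpleGraph.Walk.start_mem_support _,
      fun s hs => Or.inr (SimpleGraph.Walk.support_dropUntil_subset _ _ hs)⟩
  | a, b, SimpleGraph.Walk.cons h r', hr, hb => by
    by_cases hx : a ∈ p.support
    · exact ⟨a, SimpleGraph.Walk.start_mem_support _, hx, p.dropUntil a hx, hp.dropUntil hx,
        SimpleGraph.Walk.start_mem_support _,
        fun s hs => Or.inr (SimpleGraph.Walk.support_dropUntil_subset _ _ hs)⟩
    · obtain ⟨hr', har'⟩ := (SimpleGraph.Walk.cons_isPath_iff h r').1 hr
      obtain ⟨m, hm1, hm2, q, hq, hmq, hqs⟩ := exists_meet_path hp r' hr' hb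
      have haq : a ∉ q.support := by
        intro hsq
        rcases hqs a hsq with h1 | h1
        · exact har' h1
        · exact hx h1
      refine ⟨m, ?_, hm2, SimpleGraph.Walk.cons h q,
        (SimpleGraph.Walk.cons_isPath_iff h q).2 ⟨hq, haq⟩, ?_, fun s hs => ?_⟩
      · rw [SimpleGraph.Walk.support_cons]; exact List.mem_cons_of_mem _ hm1
      · rw [SimpleGraph.Walk.support_cons]; exact List.mem_cons_of_mem _ hmq
      · rw [SimpleGraph.Walk.support_cons] at hs
        rcases List.mem_cons.1 hs with rfl | hs
        · exact Or.inl (SimpleGraph.Walk.start_mem_support _)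
        · rcases hqs s hs with h1 | h1
          · exact Or.inl (by rw [SimpleGraph.Walk.support_cons]; exact List.mem_cons_of_mem _ h1)
          · exact Or.inr h1

/-- In a tree `T`, if `F` is a center-closed set of vertices
(i.e. `F` contains the center of any three distinct vertices of `F`), then the
boundary `∂A` of any connected component `A` of `T \ F` (the vertices of `F`
adjacent to `A`) has at most two elements.

Center-closedness is expressed as: any vertex lying on the paths joining each
pair of three distinct vertices of `F` belongs to `F` (in a tree, the center
is the unique such vertex). The component of `v ∉ F` in `T \ F` is the set of
vertices reachable from `v` by walks avoiding `F`. -/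
theorem tree_component_boundary_at_most_two
    {V : Type*} (T : SimpleGraph V) (hT : T.IsTree) (F : Set V)
    (hcc : ∀ x ∈ F, ∀ y ∈ F, ∀ z ∈ F, x ≠ y → y ≠ z → x ≠ z →
      ∀ c : V,
        (∃ p : T.Walk x y, p.IsPath ∧ c ∈ p.support) →
        (∃ p : T.Walk y z, p.IsPath ∧ c ∈ p.support) →
        (∃ p : T.Walk z x, p.IsPath ∧ c ∈ p.support) → c ∈ F)
    (v : V) (hv : v ∉ F) :
    ∀ u₁ u₂ u₃ : V,
      (u₁ ∈ F ∧ ∃ w : V, (∃ p : T.Walk v w, ∀ s ∈ p.support, s ∉ F) ∧ T.Adj u₁ w) →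
      (u₂ ∈ F ∧ ∃ w : V, (∃ p : T.Walk v w, ∀ s ∈ p.support, s ∉ F) ∧ T.Adj u₂ w) →
      (u₃ ∈ F ∧ ∃ w : V, (∃ p : T.Walk v w, ∀ s ∈ p.support, s ∉ F) ∧ T.Adj u₃ w) →
      u₁ = u₂ ∨ u₂ = u₃ ∨ u₁ = u₃ := by
  classical
  intro u₁ u₂ u₃ ⟨hF1, w₁, ⟨q₁, hq₁⟩, ha1⟩ ⟨hF2, w₂, ⟨q₂, hq₂⟩, ha2⟩ ⟨hF3, w₃, ⟨q₃, hq₃⟩, ha3⟩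
  by_contra hcon
  push_neg at hcon
  obtain ⟨h12, h23, h13⟩ := hcon
  -- walks from uᵢ to v whose support is uᵢ followed by F-avoiding vertices
  let W₁ : T.Walk u₁ v := SimpleGraph.Walk.cons ha1 q₁.reverse
  let W₂ : T.Walk u₂ v := SimpleGraph.Walk.cons ha2 q₂.reverse
  let W₃ : T.Walk u₃ v := SimpleGraph.Walk.cons ha3 q₃.reverse
  have hW : ∀ (u wu : V) (hu : T.Adj u wu) (q : T.Walk v wu), (∀ s ∈ q.support, s ∉ F) →
      ∀ s ∈ (SimpleGraph.Walk.cons hu q.reverse : T.Walk u v).support, s = u ∨ s ∉ F := by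
    intro u wu hu q hq s hs
    rw [SimpleGraph.Walk.support_cons] at hs
    rcases List.mem_cons.1 hs with rfl | hs
    · exact Or.inl rfl
    · exact Or.inr (hq s (by rwa [SimpleGraph.Walk.support_reverse, List.mem_reverse] at hs))
  have hW₁ := hW u₁ w₁ ha1 q₁ hq₁
  have hW₂ := hW u₂ w₂ ha2 q₂ hq₂
  have hW₃ := hW u₃ w₃ ha3 q₃ hq₃
  -- paths between the uᵢ
  let p : T.Walk u₁ u₂ := (W₁.append W₂.reverse).toPath
  let p' : T.Walk u₂ u₃ := (W₂.append W₃.reverse).toPath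
  let r : T.Walk u₃ u₁ := (W₃.append W₁.reverse).toPath
  have hp : p.IsPath := (W₁.append W₂.reverse).toPath.2
  have hp' : p'.IsPath := (W₂.append W₃.reverse).toPath.2
  have hr : r.IsPath := (W₃.append W₁.reverse).toPath.2
  have supbound : ∀ (a b : V) (Wa : T.Walk a v) (Wb : T.Walk b v)
      (hWa : ∀ s ∈ Wa.support, s = a ∨ s ∉ F) (hWb : ∀ s ∈ Wb.support, s = b ∨ s ∉ F),
      ∀ s ∈ ((Wa.append Wb.reverse).toPath : T.Walk a b).support, s = a ∨ s = b ∨ s ∉ F := by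
    intro a b Wa Wb hWa hWb s hs
    have := (Wa.append Wb.reverse).support_toPath_subset hs
    rw [SimpleGraph.Walk.mem_support_append_iff] at this
    rcases this with h1 | h1
    · rcases hWa s h1 with h2 | h2
      · exact Or.inl h2
      · exact Or.inr (Or.inr h2)
    · rw [SimpleGraph.Walk.support_reverse, List.mem_reverse] at h1
      rcases hWb s h1 with h2 | h2
      · exact Or.inr (Or.inl h2)
      · exact Or.inr (Or.inr h2)
  have hps := supbound u₁ u₂ W₁ W₂ hW₁ hW₂
  have hps' := supbound u₂ u₃ W₂ W₃ hW₂ hW₃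
  have hrs := supbound u₃ u₁ W₃ W₁ hW₃ hW₁
  -- find the meeting vertex m
  obtain ⟨m, hmr, hmp, q, hq, hmq, hqs⟩ :=
    exists_meet_path hp (r : T.Walk u₃ u₁) hr (SimpleGraph.Walk.start_mem_support p)
  -- q : u₃ → u₂ path; its reverse equals p' by uniqueness in a tree
  have huniq := hT.existsUnique_path u₂ u₃
  have : q.reverse = p' := huniq.unique (hq.reverse) hp'
  have hmp' : m ∈ p'.support := by
    rw [← this, SimpleGraph.Walk.support_reverse, List.mem_reverse]; exact hmq
  -- m is in F by center-closedness
  have hmF : m ∈ F := hcc u₁ hF1 u₂ hF2 u₃ hF3 h12 h23 h13 m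
    ⟨p, hp, hmp⟩ ⟨q.reverse, hq.reverse, by rw [SimpleGraph.Walk.support_reverse, List.mem_reverse]; exact hmq⟩
    ⟨r, hr, hmr⟩
  -- derive the contradiction
  have c1 := hps m hmp
  have c2 := hps' m hmp'
  have c3 := hrs m hmr
  rcases c1 with h1 | h1 | h1
  · subst h1
    rcases c2 with h2 | h2 | h2
    exacts [h12 h2, h13 h2, h2 hmF]
  · subst h1
    rcases c3 with h2 | h2 | h2
    exacts [h23 h2, h12 h2.symm, h2 hmF]
  · exact h1 hmF
end

section
/- Let T be a tree, F ⊆ V(T), f : F → F' a bijection which is the restriction of a tree isomorphism [F] → [F'] (where [F] is the minimal subtree containing F), and suppose for each connected component A of T \ F there is a tree isomorphism h_A : A ∪ ∂A → B ∪ ∂B onto the closure of a component B of T \ F' with h_A agreeing with f on ∂A, such that A ↦ h_A(A) is a bijection between components of T \ F and of T \ F'. Then the map h : V(T) → V(T) defined by h = f on F and h = h_A on each A is an automorphism of T. -/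
variable {V : Type*}

/-- `v` lies in the minimal subtree `[F]` of `T` spanned by `F`, i.e. on the
path between two vertices of `F`. -/
def InHull (T : SimpleGraph V) (F : Set V) (v : V) : Prop :=
  ∃ x ∈ F, ∃ y ∈ F, ∃ p : T.Walk x y, p.IsPath ∧ v ∈ p.support

/-- `A` is a connected component of `T \ F`: the set of vertices reachable
from some `v ∉ F` by walks avoiding `F`. -/
def IsCompOf (T : SimpleGraph V) (F : Set V) (A : Set V) : Prop :=
  ∃ v : V, v ∉ F ∧ A = {w | ∃ p : T.Walk v w, ∀ s ∈ p.support, s ∉ F}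

/-- The boundary `∂A` of a component `A` of `T \ F`: the vertices of `F`
adjacent to `A`. -/
def Bd (T : SimpleGraph V) (F : Set V) (A : Set V) : Set V :=
  {u | u ∈ F ∧ ∃ w ∈ A, T.Adj u w}

namespace TreePatch

variable {T : SimpleGraph V} {F : Set V}

lemma inHull_of_mem {v : V} (hv : v ∈ F) : InHull T F v :=
  ⟨v, hv, v, hv, SimpleGraph.Walk.nil, SimpleGraph.Walk.IsPath.nil, by simp⟩

/-- The reachability set avoiding `F`. -/
def reach (T : SimpleGraph V) (F : Set V) (v : V) : Set V :=
  {w | ∃ p : T.Walk v w, ∀ s ∈ p.support, s ∉ F}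

lemma reach_isCompOf {v : V} (hv : v ∉ F) : IsCompOf T F (reach T F v) := ⟨v, hv, rfl⟩

lemma mem_reach_self {v : V} (hv : v ∉ F) : v ∈ reach T F v :=
  ⟨SimpleGraph.Walk.nil, by simpa using hv⟩

lemma comp_disjoint {A : Set V} (hA : IsCompOf T F A) {w : V} (hw : w ∈ A) : w ∉ F := by
  obtain ⟨v, hv, rfl⟩ := hA
  obtain ⟨p, hp⟩ := hw
  exact hp w p.end_mem_support

lemma comp_eq_reach {A : Set V} (hA : IsCompOf T F A) {x : V} (hx : x ∈ A) :
    A = reach T F x := by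
  obtain ⟨v, hv, rfl⟩ := hA
  obtain ⟨p, hp⟩ := hx
  ext w
  constructor
  · rintro ⟨q, hq⟩
    refine ⟨p.reverse.append q, ?_⟩
    intro s hs
    rw [SimpleGraph.Walk.mem_support_append_iff] at hs
    rcases hs with hs | hs
    · rw [SimpleGraph.Walk.support_reverse, List.mem_reverse] at hs
      exact hp s hs
    · exact hq s hs
  · rintro ⟨q, hq⟩
    refine ⟨p.append q, ?_⟩
    intro s hs
    rw [SimpleGraph.Walk.mem_support_append_iff] at hs
    rcases hs with hs | hs
    · exact hp s hs
    · exact hq s hs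

lemma comp_unique {A A' : Set V} (hA : IsCompOf T F A) (hA' : IsCompOf T F A')
    {x : V} (hx : x ∈ A) (hx' : x ∈ A') : A = A' := by
  rw [comp_eq_reach hA hx, comp_eq_reach hA' hx']

lemma adj_mem_comp {A : Set V} (hA : IsCompOf T F A) {u v : V}
    (hu : u ∈ A) (hv : v ∉ F) (hadj : T.Adj u v) : v ∈ A := by
  rw [comp_eq_reach hA hu]
  refine ⟨SimpleGraph.Walk.cons hadj SimpleGraph.Walk.nil, ?_⟩
  intro s hs
  simp only [SimpleGraph.Walk.support_cons, SimpleGraph.Walk.support_nil,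
    List.mem_cons, List.mem_singleton] at hs
  rcases hs with rfl | hs
  · exact comp_disjoint hA hu
  · simp only [List.mem_cons, List.not_mem_nil, or_false] at hs
    subst hs; exact hv

end TreePatch

/-- patchwork for trees: let `T` be a tree, `F, F' ⊆ V(T)`, and
`h : V → V` a map which (i) restricts to a bijection `F → F'` that is the
restriction of a tree isomorphism `[F] → [F']`; (ii) on the closure
`A ∪ ∂A` of each component `A` of `T \ F` restricts to a tree isomorphism onto
the closure `B ∪ ∂B` of a component `B` of `T \ F'` (agreeing on `∂A ⊆ F` with
the map from (i)), with `h(A) = B`; and (iii) induces a bijection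
`A ↦ h(A)` between the components of `T \ F` and those of `T \ F'`. Then `h`
is an automorphism of `T`. -/
theorem tree_patchwork (T : SimpleGraph V) (hT : T.IsTree)
    (F F' : Set V) (h : V → V)
    (hbij : Set.BijOn h F F')
    (hhull : ∃ φ : V → V, Set.BijOn φ {v | InHull T F v} {v | InHull T F' v} ∧
      (∀ u v : V, InHull T F u → InHull T F v → (T.Adj u v ↔ T.Adj (φ u) (φ v))) ∧
      Set.EqOn φ h F)
    (hcomp : ∀ A : Set V, IsCompOf T F A → ∃ B : Set V, IsCompOf T F' B ∧
      Set.BijOn h (A ∪ Bd T F A) (B ∪ Bd T F' B) ∧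
      (∀ u v : V, u ∈ A ∪ Bd T F A → v ∈ A ∪ Bd T F A →
        (T.Adj u v ↔ T.Adj (h u) (h v))) ∧
      h '' A = B)
    (hcomp_bij : ∀ B : Set V, IsCompOf T F' B →
      ∃! A : Set V, IsCompOf T F A ∧ h '' A = B) :
    Function.Bijective h ∧ ∀ u v : V, T.Adj u v ↔ T.Adj (h u) (h v) := by
  obtain ⟨φ, hφbij, hφadj, hφeq⟩ := hhull
  have key : ∀ u : V, u ∉ F → ∃ A B : Set V, IsCompOf T F A ∧ u ∈ A ∧ IsCompOf T F' B ∧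
      Set.BijOn h (A ∪ Bd T F A) (B ∪ Bd T F' B) ∧
      (∀ x y : V, x ∈ A ∪ Bd T F A → y ∈ A ∪ Bd T F A →
        (T.Adj x y ↔ T.Adj (h x) (h y))) ∧ h '' A = B := by
    intro u hu
    obtain ⟨B, hB, hbij', hiff, himg⟩ := hcomp _ (TreePatch.reach_isCompOf hu)
    exact ⟨_, B, TreePatch.reach_isCompOf hu, TreePatch.mem_reach_self hu, hB, hbij', hiff, himg⟩
  have hF' : ∀ u, u ∈ F → h u ∈ F' := fun u hu => hbij.mapsTo hu
  have hnF' : ∀ u, u ∉ F → h u ∉ F' := by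
    intro u hu
    obtain ⟨A, B, hA, huA, hB, -, -, himg⟩ := key u hu
    exact TreePatch.comp_disjoint hB (by rw [← himg]; exact ⟨u, huA, rfl⟩)
  have hinj : Function.Injective h := by
    intro u v huv
    by_cases hu : u ∈ F
    · by_cases hv : v ∈ F
      · exact hbij.injOn hu hv huv
      · exact absurd (hF' u hu) (by rw [huv]; exact hnF' v hv)
    · by_cases hv : v ∈ F
      · exact absurd (hF' v hv) (by rw [← huv]; exact hnF' u hu)
      · obtain ⟨A, B, hA, huA, hB, hbijA, -, himg⟩ := key u hu
        obtain ⟨A', B', hA', hvA', hB', -, -, himg'⟩ := key v hv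
        have huB : h u ∈ B := by rw [← himg]; exact ⟨u, huA, rfl⟩
        have hvB' : h u ∈ B' := by rw [huv, ← himg']; exact ⟨v, hvA', rfl⟩
        have hBB' : B = B' := TreePatch.comp_unique hB hB' huB hvB'
        have hAA' : A = A' := by
          obtain ⟨Au, -, huniq⟩ := hcomp_bij B hB
          rw [huniq A ⟨hA, himg⟩, huniq A' ⟨hA', by rw [himg', hBB']⟩]
        exact hbijA.injOn (Or.inl huA) (Or.inl (by rw [hAA']; exact hvA')) huv
  have hsurj : Function.Surjective h := by
    intro y
    by_cases hy : y ∈ F'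
    · obtain ⟨x, -, hxy⟩ := hbij.surjOn hy
      exact ⟨x, hxy⟩
    · obtain ⟨A, ⟨hA, himg⟩, -⟩ := hcomp_bij _ (TreePatch.reach_isCompOf hy)
      have : y ∈ h '' A := by rw [himg]; exact TreePatch.mem_reach_self hy
      obtain ⟨x, -, hxy⟩ := this
      exact ⟨x, hxy⟩
  have fwd : ∀ u v : V, T.Adj u v → T.Adj (h u) (h v) := by
    intro u v hadj
    by_cases hu : u ∈ F
    · by_cases hv : v ∈ F
      · have := (hφadj u v (TreePatch.inHull_of_mem hu) (TreePatch.inHull_of_mem hv)).mp hadj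
        rwa [hφeq hu, hφeq hv] at this
      · obtain ⟨A, B, hA, hvA, hB, -, hiff, -⟩ := key v hv
        exact (hiff u v (Or.inr ⟨hu, v, hvA, hadj⟩) (Or.inl hvA)).mp hadj
    · obtain ⟨A, B, hA, huA, hB, -, hiff, -⟩ := key u hu
      by_cases hv : v ∈ F
      · exact (hiff u v (Or.inl huA) (Or.inr ⟨hv, u, huA, hadj.symm⟩)).mp hadj
      · exact (hiff u v (Or.inl huA)
          (Or.inl (TreePatch.adj_mem_comp hA huA hv hadj))).mp hadj
  have bwd1 : ∀ u v : V, u ∉ F → T.Adj (h u) (h v) → T.Adj u v := by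
    intro u v hu hadj
    obtain ⟨A, B, hA, huA, hB, hbijA, hiff, himg⟩ := key u hu
    have hhuB : h u ∈ B := by rw [← himg]; exact ⟨u, huA, rfl⟩
    by_cases hv : v ∈ F
    · have hhv : h v ∈ Bd T F' B := ⟨hF' v hv, h u, hhuB, hadj.symm⟩
      obtain ⟨w, hw, hwv⟩ := hbijA.surjOn (Or.inr hhv)
      have hwnA : w ∉ A := by
        intro hwA
        have hwB : h w ∈ B := by rw [← himg]; exact ⟨w, hwA, rfl⟩
        exact TreePatch.comp_disjoint hB hwB (by rw [hwv]; exact hF' v hv)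
      have hwBd : w ∈ Bd T F A := hw.resolve_left hwnA
      have hweq : w = v := hbij.injOn hwBd.1 hv hwv
      subst hweq
      exact (hiff u w (Or.inl huA) (Or.inr hwBd)).mpr hadj
    · obtain ⟨A', B', hA', hvA', hB', -, -, himg'⟩ := key v hv
      have hhvB' : h v ∈ B' := by rw [← himg']; exact ⟨v, hvA', rfl⟩
      have hhvB : h v ∈ B := TreePatch.adj_mem_comp hB hhuB (hnF' v hv) hadj
      have hBB : B' = B := TreePatch.comp_unique hB' hB hhvB' hhvB
      have hAA : A' = A := by
        obtain ⟨Au, -, huniq⟩ := hcomp_bij B hB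
        rw [huniq A' ⟨hA', by rw [himg', hBB]⟩, huniq A ⟨hA, himg⟩]
      exact (hiff u v (Or.inl huA) (Or.inl (by rw [← hAA]; exact hvA'))).mpr hadj
  refine ⟨⟨hinj, hsurj⟩, fun u v => ⟨fwd u v, fun hadj => ?_⟩⟩
  by_cases hu : u ∈ F
  · by_cases hv : v ∈ F
    · exact (hφadj u v (TreePatch.inHull_of_mem hu) (TreePatch.inHull_of_mem hv)).mpr
        (by rwa [hφeq hu, hφeq hv])
    · exact (bwd1 v u hv hadj.symm).symm
  · exact bwd1 u v hu hadj
end
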